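/- Consider the Undecided State Dynamics and define $Z(t) = n - 2u(t) - x_{\max}(t)$, where $u(t)$ is the number of undecided agents and $x_{\max}(t)$ is the maximum opinion support. If $Z(t) \geq 0$ and $u(t) < n/2$, then $\mathbb{E}[Z(t) - Z(t+1) \mid \mathbf{X}(t) = \mathbf{x}] \geq Z(t)/(2n)$. -/

import Mathlib

/-- One interaction of the Undecided State Dynamics: in the ordered pair `pr`,
`pr.1` is the responder and `pr.2` the initiator; `none` is the undecided state. -/
def usdStep {n k : ℕ} (σ : Fin n → Option (Fin k)) (pr : Fin n × Fin n) :
    Fin n → Option (Fin k) := fun a =>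
  if a = pr.1 then
    match σ pr.1, σ pr.2 with
    | some i, some j => if i = j then some i else none
    | none, some j => some j
    | s, _ => s
  else σ a

/-- The number of undecided agents in a configuration. -/
def undecidedCount {n k : ℕ} (σ : Fin n → Option (Fin k)) : ℕ :=
  (Finset.univ.filter fun a => σ a = none).card

/-- The support of opinion `i` in a configuration. -/
def opinionSupport {n k : ℕ} (σ : Fin n → Option (Fin k)) (i : Fin k) : ℕ :=
  (Finset.univ.filter fun a => σ a = some i).card

/-- The support of the largest opinion in a configuration. -/
def maxSupport {n k : ℕ} (σ : Fin n → Option (Fin k)) : ℕ :=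
  Finset.univ.sup (opinionSupport σ)

/-- The potential `Z = n - 2u - x_max` of a configuration. -/
noncomputable def usdPotential {n k : ℕ} (σ : Fin n → Option (Fin k)) : ℝ :=
  (n : ℝ) - 2 * undecidedCount σ - maxSupport σ

/-!
Every interaction changes the potential `Z = n - 2u - x_max` by an amount bounded below in
terms of the states of the two agents alone. Writing `e_i ∈ {0, 1}` for the indicator that
opinion `i` is a largest one: an undecided responder adopting opinion `j` lowers `Z` by at
least `e_j - 2`, a responder of opinion `i` meeting another opinion lowers it by at least
`2 - e_i`, and every other interaction leaves the configuration unchanged. Summed over all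
`n²` ordered pairs, these bounds group by opinion into `∑ i, x_i (2 - e_i) (n - 2u - x_i)`.
Since `n - 2u - x_i ≥ Z ≥ 0` and `2 - e_i ≥ 1`, this is at least `(n - u) Z ≥ n Z / 2`.
-/

open Finset Function

section Counting

variable {α β : Type*} [Fintype α]

lemma card_filter_update_add [DecidableEq α] (σ : α → β) (a : α) (v : β) (p : β → Prop)
    [DecidablePred p] :
    #{b | p (update σ a v b)} + (if p (σ a) then 1 else 0)
      = #{b | p (σ b)} + (if p v then 1 else 0) := by
  have hupd : (fun b => if p (update σ a v b) then 1 else 0)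
      = update (fun b => if p (σ b) then 1 else 0) a (if p v then 1 else 0) :=
    comp_update (fun s => if p s then 1 else 0) σ a v
  rw [card_filter, card_filter, hupd, sum_update_of_mem (mem_univ a),
    ← add_sum_erase univ _ (mem_univ a), sdiff_singleton_eq_erase]
  ring

lemma sum_comp_eq_sum_card_mul [Fintype β] [DecidableEq β] {R : Type*} [NonAssocSemiring R]
    (σ : α → β) (h : β → R) : ∑ a, h (σ a) = ∑ s, (#{a | σ a = s} : R) * h s := by
  rw [← sum_fiberwise univ σ]
  refine sum_congr rfl fun s _ => ?_
  rw [sum_congr rfl fun a ha => by rw [(mem_filter.1 ha).2], sum_const, nsmul_eq_mul]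

end Counting

section Configuration

variable {n k : ℕ} (σ : Fin n → Option (Fin k))

lemma sum_apply_eq_undecided_add_sum_support (h : Option (Fin k) → ℝ) :
    ∑ a, h (σ a) = undecidedCount σ * h none + ∑ i, opinionSupport σ i * h (some i) := by
  rw [sum_comp_eq_sum_card_mul, Fintype.sum_option]
  rfl

lemma undecidedCount_add_sum_opinionSupport :
    (undecidedCount σ : ℝ) + ∑ i, (opinionSupport σ i : ℝ) = n := by
  simpa using (sum_apply_eq_undecided_add_sum_support σ fun _ => 1).symm

lemma opinionSupport_le_maxSupport (i : Fin k) : opinionSupport σ i ≤ maxSupport σ :=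
  le_sup (mem_univ i)

variable {σ} {a : Fin n}

lemma undecidedCount_update_none {i : Fin k} (h : σ a = some i) :
    undecidedCount (update σ a none) = undecidedCount σ + 1 := by
  simpa [h, undecidedCount] using card_filter_update_add σ a none (· = none)

lemma undecidedCount_update_some (h : σ a = none) (j : Fin k) :
    undecidedCount (update σ a (some j)) + 1 = undecidedCount σ := by
  simpa [h, undecidedCount] using card_filter_update_add σ a (some j) (· = none)

lemma opinionSupport_update_none {i : Fin k} (h : σ a = some i) (l : Fin k) :
    opinionSupport (update σ a none) l + (if i = l then 1 else 0) = opinionSupport σ l := by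
  simpa [h, opinionSupport] using card_filter_update_add σ a none (· = some l)

lemma opinionSupport_update_some (h : σ a = none) (j l : Fin k) :
    opinionSupport (update σ a (some j)) l = opinionSupport σ l + (if j = l then 1 else 0) := by
  simpa [h, opinionSupport] using card_filter_update_add σ a (some j) (· = some l)

end Configuration

section Potential

variable {n k : ℕ}

def maxIndicator (σ : Fin n → Option (Fin k)) (i : Fin k) : ℕ :=
  if opinionSupport σ i = maxSupport σ then 1 else 0

lemma maxIndicator_le_one (σ : Fin n → Option (Fin k)) (i : Fin k) : maxIndicator σ i ≤ 1 := by
  unfold maxIndicator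
  split_ifs <;> omega

variable {σ : Fin n → Option (Fin k)} {a : Fin n}

lemma maxSupport_le_update_none_add {i : Fin k} (h : σ a = some i) :
    maxSupport σ ≤ maxSupport (update σ a none) + maxIndicator σ i := by
  obtain ⟨l, -, hl⟩ := exists_mem_eq_sup univ ⟨i, mem_univ i⟩ (opinionSupport σ)
  have hM : maxSupport σ = opinionSupport σ l := hl
  have hupd := opinionSupport_update_none h l
  have hle := opinionSupport_le_maxSupport (update σ a none) l
  by_cases hil : i = l
  · subst hil
    rw [if_pos rfl] at hupd
    rw [maxIndicator, if_pos hM.symm]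
    omega
  · simp only [if_neg hil] at hupd
    omega

lemma maxSupport_add_le_update_some (h : σ a = none) (j : Fin k) :
    maxSupport σ + maxIndicator σ j ≤ maxSupport (update σ a (some j)) := by
  have hupd := opinionSupport_update_some h j
  have hle := opinionSupport_le_maxSupport (update σ a (some j)) j
  by_cases hj : opinionSupport σ j = maxSupport σ
  · rw [hupd, if_pos rfl] at hle
    rw [maxIndicator, if_pos hj]
    omega
  · rw [maxIndicator, if_neg hj, add_zero]
    refine sup_mono_fun fun l _ => ?_
    rw [hupd l]
    omega

lemma two_sub_maxIndicator_le_usdPotential_sub_update_none {i : Fin k} (h : σ a = some i) :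
    2 - (maxIndicator σ i : ℝ) ≤ usdPotential σ - usdPotential (update σ a none) := by
  have hu : (undecidedCount (update σ a none) : ℝ) = undecidedCount σ + 1 := by
    exact_mod_cast undecidedCount_update_none h
  have hM : (maxSupport σ : ℝ) ≤ maxSupport (update σ a none) + maxIndicator σ i := by
    exact_mod_cast maxSupport_le_update_none_add h
  simp only [usdPotential, hu]
  linarith

lemma maxIndicator_sub_two_le_usdPotential_sub_update_some (h : σ a = none) (j : Fin k) :
    (maxIndicator σ j : ℝ) - 2 ≤ usdPotential σ - usdPotential (update σ a (some j)) := by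
  have hu : (undecidedCount (update σ a (some j)) : ℝ) + 1 = undecidedCount σ := by
    exact_mod_cast undecidedCount_update_some h j
  have hM : (maxSupport σ : ℝ) + maxIndicator σ j ≤ maxSupport (update σ a (some j)) := by
    exact_mod_cast maxSupport_add_le_update_some h j
  simp only [usdPotential]
  linarith

end Potential

section Step

variable {n k : ℕ} {σ : Fin n → Option (Fin k)} {a b : Fin n}

lemma usdStep_eq_self (h : σ b = none ∨ σ a = σ b) : usdStep σ (a, b) = σ := by
  funext c
  by_cases hc : c = a
  · subst hc
    simp only [usdStep]
    rcases h with hb | hab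
    · rw [hb]
      rcases σ c with _ | i <;> rfl
    · rw [hab]
      rcases σ b with _ | j <;> simp
  · simp [usdStep, hc]

lemma usdStep_of_conflict {i j : Fin k} (ha : σ a = some i) (hb : σ b = some j) (hij : i ≠ j) :
    usdStep σ (a, b) = update σ a none := by
  funext c
  by_cases hc : c = a
  · subst hc
    simp [usdStep, ha, hb, hij]
  · simp [usdStep, hc]

lemma usdStep_of_adoption {j : Fin k} (ha : σ a = none) (hb : σ b = some j) :
    usdStep σ (a, b) = update σ a (some j) := by
  funext c
  by_cases hc : c = a
  · subst hc
    simp [usdStep, ha, hb]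
  · simp [usdStep, hc]

end Step

section Drift

variable {n k : ℕ} (σ : Fin n → Option (Fin k))

noncomputable def potentialDropBound : Option (Fin k) → Option (Fin k) → ℝ
  | some i, some j => if i = j then 0 else 2 - maxIndicator σ i
  | none, some j => maxIndicator σ j - 2
  | _, none => 0

lemma potentialDropBound_le (a b : Fin n) :
    potentialDropBound σ (σ a) (σ b) ≤ usdPotential σ - usdPotential (usdStep σ (a, b)) := by
  rcases ha : σ a with _ | i <;> rcases hb : σ b with _ | j
  · simp [potentialDropBound, usdStep_eq_self (Or.inl hb)]
  · simpa [potentialDropBound, usdStep_of_adoption ha hb]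
      using maxIndicator_sub_two_le_usdPotential_sub_update_some ha j
  · simp [potentialDropBound, usdStep_eq_self (Or.inl hb)]
  · by_cases hij : i = j
    · subst hij
      simp [potentialDropBound, usdStep_eq_self (Or.inr (ha.trans hb.symm))]
    · simpa [potentialDropBound, hij, usdStep_of_conflict ha hb hij]
        using two_sub_maxIndicator_le_usdPotential_sub_update_none ha

lemma sum_potentialDropBound :
    ∑ pr : Fin n × Fin n, potentialDropBound σ (σ pr.1) (σ pr.2)
      = ∑ i, (opinionSupport σ i : ℝ) * (2 - maxIndicator σ i)
          * (n - 2 * undecidedCount σ - opinionSupport σ i) := by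
  set u : ℝ := (undecidedCount σ : ℝ)
  set x : Fin k → ℝ := fun i => (opinionSupport σ i : ℝ)
  have hsum : u + ∑ j, x j = n := undecidedCount_add_sum_opinionSupport σ
  have hconflict (i : Fin k) : ∑ j, x j * potentialDropBound σ (some i) (some j)
      = (2 - maxIndicator σ i) * (n - u - x i) := by
    have hsplit (j : Fin k) : x j * potentialDropBound σ (some i) (some j)
        = x j * (2 - maxIndicator σ i) - if i = j then x j * (2 - maxIndicator σ i) else 0 := by
      simp only [potentialDropBound]
      split_ifs <;> ring
    rw [sum_congr rfl fun j _ => hsplit j, sum_sub_distrib, sum_ite_eq, if_pos (mem_univ i),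
      ← sum_mul, ← hsum]
    ring
  have hinner (s : Option (Fin k)) : ∑ b, potentialDropBound σ s (σ b)
      = ∑ j, x j * potentialDropBound σ s (some j) := by
    rw [sum_apply_eq_undecided_add_sum_support]
    cases s <;> simp [potentialDropBound, x]
  calc ∑ pr : Fin n × Fin n, potentialDropBound σ (σ pr.1) (σ pr.2)
      = ∑ a, ∑ j, x j * potentialDropBound σ (σ a) (some j) := by
        rw [Fintype.sum_prod_type]
        exact sum_congr rfl fun a _ => hinner (σ a)
    _ = ∑ i, (u * (x i * (maxIndicator σ i - 2))
          + x i * ((2 - maxIndicator σ i) * (n - u - x i))) := by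
        rw [sum_apply_eq_undecided_add_sum_support σ
          (fun s => ∑ j, x j * potentialDropBound σ s (some j)), sum_add_distrib, mul_sum]
        simp only [hconflict]
        rfl
    _ = _ := sum_congr rfl fun i _ => by ring

lemma decided_mul_usdPotential_le_sum_potentialDropBound (hZ : 0 ≤ usdPotential σ) :
    (n - undecidedCount σ) * usdPotential σ
      ≤ ∑ pr : Fin n × Fin n, potentialDropBound σ (σ pr.1) (σ pr.2) := by
  have hdecided : (n : ℝ) - undecidedCount σ = ∑ i, (opinionSupport σ i : ℝ) := by
    linarith [undecidedCount_add_sum_opinionSupport σ]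
  rw [sum_potentialDropBound, hdecided, sum_mul]
  refine sum_le_sum fun i _ => ?_
  have hx : (opinionSupport σ i : ℝ) ≤ maxSupport σ := by
    exact_mod_cast opinionSupport_le_maxSupport σ i
  have he : (maxIndicator σ i : ℝ) ≤ 1 := by exact_mod_cast maxIndicator_le_one σ i
  have hgap : usdPotential σ ≤ n - 2 * undecidedCount σ - opinionSupport σ i := by
    unfold usdPotential
    linarith
  rw [mul_assoc]
  gcongr
  calc usdPotential σ ≤ n - 2 * undecidedCount σ - opinionSupport σ i := hgap
    _ ≤ (2 - maxIndicator σ i) * (n - 2 * undecidedCount σ - opinionSupport σ i) :=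
      le_mul_of_one_le_left (hZ.trans hgap) (by linarith)

end Drift

theorem usd_potential_drift_general
    {n k : ℕ} (σ : Fin n → Option (Fin k))
    (hZ : 0 ≤ usdPotential σ)
    (hu : 2 * (undecidedCount σ : ℝ) < n) :
    usdPotential σ / (2 * n)
      ≤ (∑ pr : Fin n × Fin n, (usdPotential σ - usdPotential (usdStep σ pr))) / n ^ 2 := by
  have hn : (0 : ℝ) < n := by linarith [(undecidedCount σ).cast_nonneg (α := ℝ)]
  have hdrift : n / 2 * usdPotential σ
      ≤ ∑ pr : Fin n × Fin n, (usdPotential σ - usdPotential (usdStep σ pr)) :=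
    calc n / 2 * usdPotential σ ≤ (n - undecidedCount σ) * usdPotential σ := by
          gcongr
          linarith
      _ ≤ ∑ pr : Fin n × Fin n, potentialDropBound σ (σ pr.1) (σ pr.2) :=
          decided_mul_usdPotential_le_sum_potentialDropBound σ hZ
      _ ≤ _ := sum_le_sum fun pr _ => potentialDropBound_le σ pr.1 pr.2
  rw [div_le_div_iff₀ (by positivity) (by positivity)]
  nlinarith

/-- For the potential `Z(t) = n - 2u(t) - x_max(t)` of the USD: if
`Z(t) ≥ 0` and `u(t) < n/2`, then the expected one-step decrease of the potential
(over a uniformly random ordered interaction) is at least `Z(t)/(2n)`. -/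
theorem usd_potential_drift
    {n k : ℕ} (hn : 0 < n) (σ : Fin n → Option (Fin k))
    (hZ : 0 ≤ usdPotential σ)
    (hu : 2 * (undecidedCount σ : ℝ) < n) :
    usdPotential σ / (2 * n)
      ≤ (∑ pr : Fin n × Fin n, (usdPotential σ - usdPotential (usdStep σ pr))) / n ^ 2 :=
  usd_potential_drift_general σ hZ hu
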